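/- Let F be the free group of rank m ≥ 2, let x ∈ Σ, and let M = {1} ∪ (C[x] ∖ C(x^{-1},x)) (i.e. the identity together with all elements whose reduced word ends with x and does not begin with x^{-1}). Then for all real t ∈ (−1,1): g_M(t) = 1 + t(2m−t)/(4m²(1−t)) + t²((2m−1)²+t)/(4m²((2m−1)²−t²)). -/

import Mathlib

open Filter Set

noncomputable section

/-- The free group of rank `m`. -/
abbrev FG (m : ℕ) := FreeGroup (Fin m)

/-- The length of the reduced word of `g`. -/
def glen {m : ℕ} (g : FG m) : ℕ := (FreeGroup.toWord g).length

/-- The cardinality of the sphere of radius `k` in the free group of rank `m`,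
as a real number: `1` if `k = 0` and `2m(2m-1)^(k-1)` otherwise. -/
def sphereCard (m k : ℕ) : ℝ :=
  if k = 0 then 1 else 2 * (m : ℝ) * (2 * (m : ℝ) - 1) ^ (k - 1)

/-- `n_k(R)`: the number of elements of length `k` in `R`. -/
def nk {m : ℕ} (R : Set (FG m)) (k : ℕ) : ℕ := {g ∈ R | glen g = k}.ncard

/-- `f_k(R) = n_k(R) / |S_k|`: the frequency of elements of `R` among words of length `k`. -/
def fk {m : ℕ} (R : Set (FG m)) (k : ℕ) : ℝ := (nk R k : ℝ) / sphereCard m k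

/-- The frequency generating function `g_R(t) = ∑ f_k(R) t^k`. -/
def genFun {m : ℕ} (R : Set (FG m)) (t : ℝ) : ℝ := ∑' k : ℕ, fk R k * t ^ k

/-- The adjusted generating function `g*_R(t) = ∑ n_k(R) (t/(2m-1))^k`. -/
def genFunStar {m : ℕ} (R : Set (FG m)) (t : ℝ) : ℝ :=
  ∑' k : ℕ, (nk R k : ℝ) * (t / (2 * (m : ℝ) - 1)) ^ k

/-- `R` is thick: `lim_{t→1⁻} (1-t)·g_R(t)` exists and is positive. -/
def IsThick {m : ℕ} (R : Set (FG m)) : Prop :=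
  ∃ c : ℝ, 0 < c ∧
    Tendsto (fun t => (1 - t) * genFun R t) (nhdsWithin 1 (Set.Iio 1)) (nhds c)

/-- `R` is exponentially negligible (exponentially λ-measurable): there is `δ ∈ (0,1)`
with `f_k(R) < δ^k` for all sufficiently large `k`. -/
def ExpNegligible {m : ℕ} (R : Set (FG m)) : Prop :=
  ∃ δ : ℝ, 0 < δ ∧ δ < 1 ∧ ∀ᶠ k : ℕ in atTop, fk R k < δ ^ k

/-- `R ⊆ F` is a regular set if the language of reduced words of its elements
(over the alphabet `Σ = X ∪ X⁻¹`, encoded as `Fin m × Bool`) is a regular language. -/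
def IsRegularSet {m : ℕ} (R : Set (FG m)) : Prop :=
  Language.IsRegular {w : List (Fin m × Bool) | ∃ g ∈ R, FreeGroup.toWord g = w}

/-- The cone `C(w) = { wf : |wf| = |w| + |f| }`. -/
def cone {m : ℕ} (w : FG m) : Set (FG m) :=
  {g | ∃ f, g = w * f ∧ glen g = glen w + glen f}

/-- The right cone `C[w] = { fw : |fw| = |f| + |w| }`. -/
def coneR {m : ℕ} (w : FG m) : Set (FG m) :=
  {g | ∃ f, g = f * w ∧ glen g = glen f + glen w}

/-- The double-based cone `C(u,v) = { ufv : |ufv| = |u| + |f| + |v| }`. -/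
def dcone {m : ℕ} (u v : FG m) : Set (FG m) :=
  {g | ∃ f, g = u * f * v ∧ glen g = glen u + glen f + glen v}

/-- The prefix closure of `R`. -/
def prefixClosure {m : ℕ} (R : Set (FG m)) : Set (FG m) :=
  {p | ∃ g ∈ R, ∃ s, g = p * s ∧ glen g = glen p + glen s}

/-- A finite deterministic partial automaton over the alphabet
`Σ = X ∪ X⁻¹` (encoded as `Fin m × Bool`), with one initial and one final state. -/
structure PAut (m : ℕ) where
  n : ℕ
  step : Fin n → Fin m × Bool → Option (Fin n)
  start : Fin n
  accept : Fin n

namespace PAut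

variable {m : ℕ}

/-- Run the automaton from state `s` on the word `w`. -/
def evalFrom (A : PAut m) : Fin A.n → List (Fin m × Bool) → Option (Fin A.n)
  | s, [] => some s
  | s, a :: w =>
    match A.step s a with
    | none => none
    | some s' => A.evalFrom s' w

/-- The set of words accepted by `A`. -/
def words (A : PAut m) : Set (List (Fin m × Bool)) :=
  {w | A.evalFrom A.start w = some A.accept}

/-- The language of `A`, identified with a subset of the free group. -/
def lang (A : PAut m) : Set (FG m) :=
  (fun w => FreeGroup.mk w) '' A.words

/-- Conditions (c)–(f) of a special automaton:
(c) every state is reachable from the initial state;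
(d) the final state is reachable from every state;
(e) all transitions entering a given state carry the same label (the type of the state);
(f) if a state has type `x`, no transition labeled `x⁻¹` leaves it. -/
def CoreSpecial (A : PAut m) : Prop :=
  (∀ s, ∃ w, A.evalFrom A.start w = some s) ∧
  (∀ s, ∃ w, A.evalFrom s w = some A.accept) ∧
  (∀ s₁ a₁ s₂ a₂ s, A.step s₁ a₁ = some s → A.step s₂ a₂ = some s → a₁ = a₂) ∧
  (∀ s' a s, A.step s' a = some s → A.step s (a.1, !a.2) = none)

/-- A special automaton over the free group: conditions (a)–(f), with distinct
initial and final states and no transition entering the initial state. -/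
def IsSpecial (A : PAut m) : Prop :=
  A.start ≠ A.accept ∧ (∀ s a, A.step s a ≠ some A.start) ∧ A.CoreSpecial

/-- A special monoid automaton: conditions (c)–(f), with the initial state equal to
the final state. -/
def IsSpecialMonoidAut (A : PAut m) : Prop :=
  A.start = A.accept ∧ A.CoreSpecial

/-- `A` is `Σ`-complete: every state `s` has a type `x` and for every label
`y ≠ x⁻¹` the transition `δ(s,y)` is defined. -/
def SigmaComplete (A : PAut m) : Prop :=
  ∀ s, ∃ a, (∃ s', A.step s' a = some s) ∧
    ∀ b, b ≠ (a.1, !a.2) → (A.step s b).isSome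

end PAut

/-- A special monoid: the language of a special monoid automaton. -/
def IsSpecialMonoid {m : ℕ} (M : Set (FG m)) : Prop :=
  ∃ A : PAut m, A.IsSpecialMonoidAut ∧ M = A.lang

/-- A thick monoid: the language of a `Σ`-complete special monoid automaton. -/
def IsThickMonoid {m : ℕ} (M : Set (FG m)) : Prop :=
  ∃ A : PAut m, A.IsSpecialMonoidAut ∧ A.SigmaComplete ∧ M = A.lang

/-!
A reduced word of length `k + 1` lies in `M` iff it ends with `x` and does not begin with `x⁻¹`.
Among the reduced words of length `n` not beginning with `x⁻¹` (there are `H_n = (2m-1)^n`), let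
`D_n` end with `x` and `E_n` with `x⁻¹`. Deleting the last letter gives
`D_{n+1} + E_n = H_n = E_{n+1} + D_n`, so `D_n - E_n = 1` for all `n ≥ 1` and
`D_{n+1} + D_n = (2m-1)^n + 1`, which solves to `2m D_{k+1} = (2m-1)^{k+1} - (-1)^k (m-1) + m`.
The generating function is then a combination of three geometric series.
-/

namespace List

variable {α : Type*}

lemma head?_append_singleton_ne_iff (b : α) (w : List α) (c : α) (hw : w ≠ []) :
    (w ++ [c]).head? ≠ some b ↔ w.head? ≠ some b := by
  rw [head?_append_of_ne_nil w hw]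

lemma exists_eq_append_singleton_iff_head? {b c : α} (hbc : b ≠ c) {L : List α}
    (hL : L.getLast? = some c) : (∃ w, L = [b] ++ w ++ [c]) ↔ L.head? = some b := by
  obtain ⟨_ | ⟨d, w⟩, rfl⟩ := getLast?_eq_some_iff.1 hL
  · simp [hbc.symm]
  · simp [eq_comm]

end List

namespace FreeGroup

variable {α : Type*}

def letterInv (c : α × Bool) : α × Bool := (c.1, !c.2)

@[simp]
lemma letterInv_letterInv (c : α × Bool) : letterInv (letterInv c) = c := by
  simp [letterInv]

lemma letterInv_ne_self (c : α × Bool) : letterInv c ≠ c :=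
  fun h => Bool.not_ne_self c.2 (congrArg Prod.snd h)

lemma isReduced_append_singleton_iff {w : List (α × Bool)} {c : α × Bool} :
    IsReduced (w ++ [c]) ↔ IsReduced w ∧ w.getLast? ≠ some (letterInv c) := by
  rw [IsReduced, List.isChain_append, ← IsReduced]
  simp only [List.isChain_singleton, List.head?_cons, Option.mem_def, Option.some.injEq,
    forall_eq', true_and]
  refine and_congr_right fun _ => ⟨fun h hl => ?_, fun h d hd hdc => ?_⟩
  · simpa [letterInv] using h _ hl
  · by_contra hne
    exact h (hd.trans (congrArg some (Prod.ext hdc (Bool.eq_not_iff.2 hne))))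

def reducedWords (n : ℕ) (P : List (α × Bool) → Prop) : Set (List (α × Bool)) :=
  {w | w.length = n ∧ IsReduced w ∧ P w}

lemma reducedWords_finite [Finite α] (n : ℕ) (P : List (α × Bool) → Prop) :
    (reducedWords n P).Finite :=
  (List.finite_length_eq _ n).subset fun _ hw => hw.1

lemma reducedWords_one (P : List (α × Bool) → Prop) :
    reducedWords 1 P = (fun c => [c]) '' {c | P [c]} := by
  ext w
  constructor
  · rintro ⟨hlen, -, hP⟩
    obtain ⟨c, rfl⟩ := List.length_eq_one_iff.1 hlen
    exact ⟨c, hP, rfl⟩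
  · rintro ⟨c, hP, rfl⟩
    exact ⟨rfl, .singleton, hP⟩

lemma ncard_reducedWords_one (P : List (α × Bool) → Prop) :
    (reducedWords 1 P).ncard = {c | P [c]}.ncard := by
  rw [reducedWords_one, Set.ncard_image_of_injective _ List.singleton_injective]

lemma ncard_reducedWords_and_add_and_not [Finite α] (n : ℕ) (P Q : List (α × Bool) → Prop) :
    (reducedWords n fun w => P w ∧ Q w).ncard + (reducedWords n fun w => P w ∧ ¬ Q w).ncard =
      (reducedWords n P).ncard := by
  rw [← Set.ncard_inter_add_ncard_sdiff_eq_ncard _ {w | Q w} (reducedWords_finite n P)]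
  congr 2 <;> ext w <;> simp [reducedWords, and_assoc]

/-- Appending `c` maps the reduced words of length `n + 1` not ending in `c⁻¹` bijectively onto
those of length `n + 2` ending in `c`. -/
lemma ncard_reducedWords_add_two_last [Finite α] {P : List (α × Bool) → Prop}
    (hP : ∀ w c, w ≠ [] → (P (w ++ [c]) ↔ P w)) (n : ℕ) (c : α × Bool) :
    (reducedWords (n + 1 + 1) fun w => P w ∧ w.getLast? = some c).ncard +
      (reducedWords (n + 1) fun w => P w ∧ w.getLast? = some (letterInv c)).ncard =
    (reducedWords (n + 1) P).ncard := by
  have himage :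
      (· ++ [c]) '' (reducedWords (n + 1) fun w => P w ∧ w.getLast? ≠ some (letterInv c)) =
        reducedWords (n + 1 + 1) fun w => P w ∧ w.getLast? = some c := by
    ext v
    constructor
    · rintro ⟨w, ⟨hlen, hred, hPw, hlast⟩, rfl⟩
      have hne : w ≠ [] := List.ne_nil_of_length_eq_add_one hlen
      exact ⟨by simp [hlen], isReduced_append_singleton_iff.2 ⟨hred, hlast⟩,
        (hP w c hne).2 hPw, List.getLast?_concat⟩
    · rintro ⟨hlen, hred, hPv, hlast⟩
      obtain ⟨w, rfl⟩ := List.getLast?_eq_some_iff.1 hlast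
      have hlen' : w.length = n + 1 := by simpa using hlen
      have hne : w ≠ [] := List.ne_nil_of_length_eq_add_one hlen'
      obtain ⟨hred', hlast'⟩ := isReduced_append_singleton_iff.1 hred
      exact ⟨w, ⟨hlen', hred', (hP w c hne).1 hPv, hlast'⟩, rfl⟩
  rw [← himage, Set.ncard_image_of_injective _ (List.append_left_injective [c]), add_comm]
  exact ncard_reducedWords_and_add_and_not _ _ _

lemma ncard_reducedWords_eq_sum_last [Fintype α] (n : ℕ) (P : List (α × Bool) → Prop) :
    (reducedWords (n + 1) P).ncard =
      ∑ c, (reducedWords (n + 1) fun w => P w ∧ w.getLast? = some c).ncard := by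
  have hunion : reducedWords (n + 1) P =
      ⋃ c, reducedWords (n + 1) fun w => P w ∧ w.getLast? = some c := by
    ext w
    simp only [reducedWords, Set.mem_iUnion, Set.mem_ofPred_eq]
    constructor
    · rintro ⟨hlen, hred, hPw⟩
      obtain ⟨c, hc⟩ := Option.ne_none_iff_exists'.1
        (List.getLast?_eq_none_iff.not.2 (List.ne_nil_of_length_eq_add_one hlen))
      exact ⟨c, hlen, hred, hPw, hc⟩
    · rintro ⟨c, hlen, hred, hPw, -⟩
      exact ⟨hlen, hred, hPw⟩
  rw [hunion, Set.ncard_iUnion_of_finite (fun _ => reducedWords_finite _ _),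
    finsum_eq_sum_of_fintype]
  intro c d hcd
  refine Set.disjoint_left.2 fun w hc hd => hcd ?_
  exact Option.some.inj (hc.2.2.2.symm.trans hd.2.2.2)

lemma ncard_reducedWords_add_two [Fintype α] {P : List (α × Bool) → Prop}
    (hP : ∀ w c, w ≠ [] → (P (w ++ [c]) ↔ P w)) (n : ℕ) :
    (reducedWords (n + 1 + 1) P).ncard + (reducedWords (n + 1) P).ncard =
      2 * Fintype.card α * (reducedWords (n + 1) P).ncard := by
  have hinv : ∑ c, (reducedWords (n + 1) fun w => P w ∧ w.getLast? = some (letterInv c)).ncard =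
      (reducedWords (n + 1) P).ncard := by
    rw [ncard_reducedWords_eq_sum_last n P]
    exact Equiv.sum_comp (Function.Involutive.toPerm _ letterInv_letterInv)
      fun c => (reducedWords (n + 1) fun w => P w ∧ w.getLast? = some c).ncard
  calc _ = ∑ c, ((reducedWords (n + 1 + 1) fun w => P w ∧ w.getLast? = some c).ncard +
          (reducedWords (n + 1) fun w => P w ∧ w.getLast? = some (letterInv c)).ncard) := by
        rw [Finset.sum_add_distrib, hinv, ← ncard_reducedWords_eq_sum_last]
    _ = _ := by
        simp only [ncard_reducedWords_add_two_last hP, Finset.sum_const, Finset.card_univ,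
          Fintype.card_prod, Fintype.card_bool, smul_eq_mul]
        ring

lemma ncard_reducedWords_head_ne [Fintype α] (b : α × Bool) (n : ℕ) :
    ((reducedWords (n + 1) fun w => w.head? ≠ some b).ncard : ℝ) =
      (2 * Fintype.card α - 1) ^ (n + 1) := by
  induction n with
  | zero =>
    have hcard := Set.ncard_compl_add_ncard ({b} : Set (α × Bool))
    rw [Set.ncard_singleton, Nat.card_eq_fintype_card, Fintype.card_prod, Fintype.card_bool]
      at hcard
    rw [ncard_reducedWords_one, zero_add, pow_one]
    simp only [List.head?_cons, ne_eq, Option.some.injEq]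
    rw [eq_sub_iff_add_eq]
    exact_mod_cast hcard.trans (mul_comm _ _)
  | succ n ih =>
    have h := ncard_reducedWords_add_two (P := fun w => w.head? ≠ some b)
      (List.head?_append_singleton_ne_iff b) n
    have h' : ((reducedWords (n + 1 + 1) fun w => w.head? ≠ some b).ncard : ℝ) +
        (reducedWords (n + 1) fun w => w.head? ≠ some b).ncard =
        2 * Fintype.card α * (reducedWords (n + 1) fun w => w.head? ≠ some b).ncard := by
      exact_mod_cast h
    linear_combination h' + (2 * (Fintype.card α : ℝ) - 1) * ih

lemma ncard_reducedWords_one_head_ne_last_self (a : α × Bool) :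
    (reducedWords 1 fun w => w.head? ≠ some (letterInv a) ∧ w.getLast? = some a).ncard = 1 := by
  rw [ncard_reducedWords_one, Set.ncard_eq_one]
  refine ⟨a, Set.ext fun c => ?_⟩
  simp only [List.head?_cons, List.getLast?_singleton, ne_eq, Option.some.injEq,
    Set.mem_ofPred_eq, Set.mem_singleton_iff]
  exact ⟨And.right, fun hc => ⟨hc ▸ (letterInv_ne_self c).symm, hc⟩⟩

lemma ncard_reducedWords_one_head_ne_last_inv (a : α × Bool) :
    (reducedWords 1 fun w =>
      w.head? ≠ some (letterInv a) ∧ w.getLast? = some (letterInv a)).ncard = 0 := by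
  rw [ncard_reducedWords_one]
  convert Set.ncard_empty (α × Bool)
  ext c
  simp

lemma ncard_reducedWords_head_ne_last_self [Fintype α] (a : α × Bool) (n : ℕ) :
    (reducedWords (n + 1) fun w => w.head? ≠ some (letterInv a) ∧ w.getLast? = some a).ncard =
      (reducedWords (n + 1) fun w =>
        w.head? ≠ some (letterInv a) ∧ w.getLast? = some (letterInv a)).ncard + 1 := by
  induction n with
  | zero =>
    rw [ncard_reducedWords_one_head_ne_last_self, ncard_reducedWords_one_head_ne_last_inv]
  | succ n ih =>
    have hP := List.head?_append_singleton_ne_iff (letterInv a)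
    have hlast := ncard_reducedWords_add_two_last
      (P := fun w => w.head? ≠ some (letterInv a)) hP n a
    have hlastInv := ncard_reducedWords_add_two_last
      (P := fun w => w.head? ≠ some (letterInv a)) hP n (letterInv a)
    rw [letterInv_letterInv] at hlastInv
    omega

lemma two_mul_ncard_reducedWords_head_ne_last [Fintype α] (a : α × Bool) (n : ℕ) :
    2 * (Fintype.card α : ℝ) * (reducedWords (n + 1) fun w =>
        w.head? ≠ some (letterInv a) ∧ w.getLast? = some a).ncard =
      (2 * Fintype.card α - 1) ^ (n + 1) - (-1) ^ n * (Fintype.card α - 1) + Fintype.card α := by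
  induction n with
  | zero =>
    rw [ncard_reducedWords_one_head_ne_last_self]
    push_cast
    ring
  | succ n ih =>
    have hlast := ncard_reducedWords_add_two_last (P := fun w => w.head? ≠ some (letterInv a))
      (List.head?_append_singleton_ne_iff (letterInv a)) n a
    have hdiff := ncard_reducedWords_head_ne_last_self a n
    have hhead := ncard_reducedWords_head_ne (letterInv a) n
    rw [← hlast] at hhead
    have hdiff' : ((reducedWords (n + 1) fun w =>
        w.head? ≠ some (letterInv a) ∧ w.getLast? = some a).ncard : ℝ) =
      (reducedWords (n + 1) fun w =>
        w.head? ≠ some (letterInv a) ∧ w.getLast? = some (letterInv a)).ncard + 1 := by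
      exact_mod_cast hdiff
    push_cast at hhead
    linear_combination (2 * (Fintype.card α : ℝ)) * (hhead + hdiff') - ih

lemma toWord_mul_mul_eq_append [DecidableEq α] {u f v : FreeGroup α}
    (h : (u * f * v).toWord.length = u.toWord.length + f.toWord.length + v.toWord.length) :
    (u * f * v).toWord = u.toWord ++ f.toWord ++ v.toWord :=
  ((toWord_mul_sublist _ _).trans ((toWord_mul_sublist u f).append_right _)).eq_of_length
    (by simpa [add_assoc] using h)

lemma ncard_preimage_toWord [DecidableEq α] {S : Set (List (α × Bool))}
    (hS : ∀ w ∈ S, IsReduced w) : (toWord ⁻¹' S).ncard = S.ncard :=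
  Set.ncard_preimage_of_injective_subset_range toWord_injective
    fun w hw => ⟨mk w, by rw [toWord_mk, (hS w hw).reduce_eq]⟩

end FreeGroup

open FreeGroup

section Cones

variable {m : ℕ}

lemma mem_dcone_iff {u v g : FG m} :
    g ∈ dcone u v ↔ ∃ w, g.toWord = u.toWord ++ w ++ v.toWord := by
  constructor
  · rintro ⟨f, rfl, h⟩
    exact ⟨f.toWord, toWord_mul_mul_eq_append h⟩
  · rintro ⟨w, hw⟩
    have hred : IsReduced w := isReduced_toWord.infix ⟨_, _, hw.symm⟩
    refine ⟨mk w, ?_, ?_⟩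
    · rw [← mk_toWord (x := g), hw, ← mul_mk, ← mul_mk, mk_toWord, mk_toWord]
    · simp [glen, hw, toWord_mk, hred.reduce_eq, add_assoc]

lemma coneR_eq_dcone_one (v : FG m) : coneR v = dcone 1 v := by
  ext g
  simp [coneR, dcone, glen]

lemma mem_coneR_diff_dcone_iff {x g : FG m} {a : Fin m × Bool} (ha : x.toWord = [a]) :
    g ∈ coneR x \ dcone x⁻¹ x ↔
      g.toWord.head? ≠ some (letterInv a) ∧ g.toWord.getLast? = some a := by
  have hinv : x⁻¹.toWord = [letterInv a] := by simp [toWord_inv, ha, invRev, letterInv]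
  rw [Set.mem_sdiff, coneR_eq_dcone_one, mem_dcone_iff, mem_dcone_iff, toWord_one, hinv, ha]
  simp only [List.nil_append, ← List.getLast?_eq_some_iff]
  rw [and_comm]
  refine and_congr_left fun hlast => ?_
  rw [List.exists_eq_append_singleton_iff_head? (letterInv_ne_self a) hlast]

lemma nk_insert_one_coneR_diff_dcone_zero (x : FG m) :
    nk (insert 1 (coneR x \ dcone x⁻¹ x)) 0 = 1 := by
  rw [nk, Set.ncard_eq_one]
  refine ⟨1, Set.ext fun g => ?_⟩
  simp only [Set.mem_ofPred_eq, Set.mem_insert_iff, glen, List.length_eq_zero_iff,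
    toWord_eq_nil_iff, Set.mem_singleton_iff]
  exact and_iff_right_of_imp Or.inl

lemma nk_insert_one_coneR_diff_dcone_succ {x : FG m} {a : Fin m × Bool} (ha : x.toWord = [a])
    (k : ℕ) : nk (insert 1 (coneR x \ dcone x⁻¹ x)) (k + 1) =
      (reducedWords (k + 1) fun w =>
        w.head? ≠ some (letterInv a) ∧ w.getLast? = some a).ncard := by
  rw [nk, ← ncard_preimage_toWord fun w hw => hw.2.1]
  congr 1
  ext g
  have hne : g.toWord.length = k + 1 → g ≠ 1 := by
    rintro hlen rfl
    simp at hlen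
  simp only [Set.mem_ofPred_eq, Set.mem_insert_iff, mem_coneR_diff_dcone_iff ha, glen,
    Set.mem_preimage, reducedWords, isReduced_toWord, true_and]
  exact ⟨fun ⟨hg, hlen⟩ => ⟨hlen, hg.resolve_left (hne hlen)⟩,
    fun ⟨hlen, hg⟩ => ⟨.inr hg, hlen⟩⟩

end Cones

lemma hasSum_mul_pow_of_four_mul_sq {m t : ℝ} (hm : 1 ≤ m) (ht : |t| < 1) {f : ℕ → ℝ}
    (h0 : f 0 = 1) (hf : ∀ k : ℕ, 4 * m ^ 2 * (2 * m - 1) ^ k * f (k + 1) =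
      (2 * m - 1) ^ (k + 1) - (-1) ^ k * (m - 1) + m) :
    HasSum (fun k => f k * t ^ k)
      (1 + t * (2 * m - t) / (4 * m ^ 2 * (1 - t))
        + t ^ 2 * ((2 * m - 1) ^ 2 + t) / (4 * m ^ 2 * ((2 * m - 1) ^ 2 - t ^ 2))) := by
  obtain ⟨ht₁, ht₂⟩ := abs_lt.1 ht
  have hm0 : m ≠ 0 := by positivity
  have hq : 0 < 2 * m - 1 := by linarith
  have hq0 : 2 * m - 1 ≠ 0 := hq.ne'
  have htq : |t / (2 * m - 1)| < 1 := by
    rw [abs_div, abs_of_pos hq, div_lt_one hq]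
    linarith
  have htq' : |-t / (2 * m - 1)| < 1 := by rwa [neg_div, abs_neg]
  have hterm : ∀ k : ℕ, f (k + 1) * t ^ (k + 1) = t * (2 * m - 1) / (4 * m ^ 2) * t ^ k +
      t / (4 * m) * (t / (2 * m - 1)) ^ k - t * (m - 1) / (4 * m ^ 2) * (-t / (2 * m - 1)) ^ k := by
    intro k
    have hqk : (2 * m - 1) ^ k ≠ 0 := pow_ne_zero k hq0
    have hfk : f (k + 1) = ((2 * m - 1) ^ (k + 1) - (-1) ^ k * (m - 1) + m) /
        (4 * m ^ 2 * (2 * m - 1) ^ k) := by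
      rw [eq_div_iff (by positivity), ← hf k]
      ring
    rw [hfk, div_pow, div_pow, neg_pow]
    field_simp
    ring
  have htail := (((hasSum_geometric_of_abs_lt_one ht).mul_left (t * (2 * m - 1) / (4 * m ^ 2))).add
    ((hasSum_geometric_of_abs_lt_one htq).mul_left (t / (4 * m)))).sub
    ((hasSum_geometric_of_abs_lt_one htq').mul_left (t * (m - 1) / (4 * m ^ 2)))
  simp only [← hterm] at htail
  convert HasSum.zero_add (f := fun k => f k * t ^ k) htail using 1
  rw [h0, pow_zero, one_mul]
  have h1t : 1 - t ≠ 0 := by linarith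
  have h2 : 2 * m - 1 - t ≠ 0 := by linarith
  have h3 : 2 * m - 1 + t ≠ 0 := by linarith
  have h4 : (2 * m - 1) ^ 2 - t ^ 2 ≠ 0 := by
    rw [sq_sub_sq]
    exact mul_ne_zero h3 h2
  rw [one_sub_div hq0, one_sub_div hq0, inv_div, inv_div, sub_neg_eq_add]
  field_simp
  ring

section Generating

variable {m : ℕ}

lemma fk_insert_one_coneR_diff_dcone_zero (x : FG m) :
    fk (insert 1 (coneR x \ dcone x⁻¹ x)) 0 = 1 := by
  rw [fk, nk_insert_one_coneR_diff_dcone_zero, sphereCard, if_pos rfl]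
  norm_num

lemma four_mul_sq_mul_fk_insert_one_coneR_diff_dcone_succ {x : FG m} {a : Fin m × Bool}
    (ha : x.toWord = [a]) (k : ℕ) :
    4 * (m : ℝ) ^ 2 * (2 * m - 1) ^ k * fk (insert 1 (coneR x \ dcone x⁻¹ x)) (k + 1) =
      (2 * m - 1) ^ (k + 1) - (-1) ^ k * (m - 1) + m := by
  have hm : (m : ℝ) ≠ 0 := Nat.cast_ne_zero.2 a.1.pos.ne'
  have hq : (2 * m - 1 : ℝ) ≠ 0 := by
    have : (1 : ℝ) ≤ m := Nat.one_le_cast.2 a.1.pos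
    linarith
  have hqk : (2 * m - 1 : ℝ) ^ k ≠ 0 := pow_ne_zero k hq
  have hcount := two_mul_ncard_reducedWords_head_ne_last a k
  rw [Fintype.card_fin] at hcount
  rw [fk, nk_insert_one_coneR_diff_dcone_succ ha, sphereCard, if_neg k.succ_ne_zero,
    Nat.add_sub_cancel, ← hcount, mul_div_assoc',
    div_eq_iff (mul_ne_zero (mul_ne_zero two_ne_zero hm) hqk)]
  ring

end Generating

theorem stmt9_general {m : ℕ} (x : FG m) (hx : glen x = 1) :
    ∀ t ∈ Set.Ioo (-1 : ℝ) 1,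
      genFun (insert (1 : FG m) (coneR x \ dcone x⁻¹ x)) t
        = 1 + t * (2 * (m : ℝ) - t) / (4 * (m : ℝ) ^ 2 * (1 - t))
          + t ^ 2 * ((2 * (m : ℝ) - 1) ^ 2 + t)
            / (4 * (m : ℝ) ^ 2 * ((2 * (m : ℝ) - 1) ^ 2 - t ^ 2)) := by
  obtain ⟨a, ha⟩ := List.length_eq_one_iff.mp hx
  intro t ht
  exact (hasSum_mul_pow_of_four_mul_sq (Nat.one_le_cast.2 a.1.pos) (abs_lt.2 ht)
    (fk_insert_one_coneR_diff_dcone_zero x)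
    (four_mul_sq_mul_fk_insert_one_coneR_diff_dcone_succ ha)).tsum_eq

/-- the generating function of `M = {1} ∪ (C[x] ∖ C(x⁻¹,x))`. -/
theorem stmt9 {m : ℕ} (hm : 2 ≤ m) (x : FG m) (hx : glen x = 1) :
    ∀ t ∈ Set.Ioo (-1 : ℝ) 1,
      genFun (insert (1 : FG m) (coneR x \ dcone x⁻¹ x)) t
        = 1 + t * (2 * (m : ℝ) - t) / (4 * (m : ℝ) ^ 2 * (1 - t))
          + t ^ 2 * ((2 * (m : ℝ) - 1) ^ 2 + t)
            / (4 * (m : ℝ) ^ 2 * ((2 * (m : ℝ) - 1) ^ 2 - t ^ 2)) :=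
  stmt9_general x hx
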